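/- arXiv:math/0609283 — 2 statements merged into one kernel-verified Lean document; each statement's English description precedes it below -/
import Mathlib

section
/- Let α ∈ ℕ, α ≥ 1, and define the polynomials p_n^{(α)}(x) = Σ_{k=0}^n (-1)^{kn - binom(k,2)} · binom(n,k)_F · binom(α+n+k-1, n)_F · x^k, where binom(·,·)_F are Fibonomial coefficients. Then for all m, n ≥ 0: (1-q^α) Σ_{j=0}^∞ q^{αj} p_n^{(α)}(q^j/φ) p_m^{(α)}(q^j/φ) = δ_{n,m} · (-1)^{αn} · F_α/F_{α+2n}, where φ = (1+√5)/2 and q = (1-√5)/(1+√5). -/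
/-
Binet's formula reads `F_j = φ ^ j (1 - q ^ j) / √5`, so Fibonomial coefficients are powers of
`φ` times Gaussian binomials in base `q`; since `φ ^ 2 q = -1`, `p_n(z / φ)` is a constant
multiple of the little q-Jacobi polynomial
`∑ₖ (-1)ᵏ q ^ (k choose 2) [n, k]_q (q / qⁿ)ᵏ (q ^ (α + k); q)_n zᵏ`.
Expanding the weight as a geometric series, the moment `∑ⱼ q ^ (α j) p_n(qʲ / φ) q ^ (j l)` is the
`n`-th q-difference of `(q ^ α z; q)_n / (1 - q ^ (α + l) z)` at the nodes `z = q ^ k`. By the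
q-binomial theorem this q-difference kills polynomials of degree `< n`, so after a partial-fraction
step only the pole contributes, with the factor `(q ^ (-l); q)_n`. It vanishes for `l < n`, which is
the orthogonality, and at `l = n` it gives the norm.
-/

noncomputable def goldenPhi : ℝ := (1 + Real.sqrt 5) / 2

noncomputable def fibQ : ℝ := (1 - Real.sqrt 5) / (1 + Real.sqrt 5)

/-- The Fibonomial coefficient `∏_{i=1}^k F_{m-i+1}/F_i`, as a real number. -/
noncomputable def fibinom (m k : ℕ) : ℝ :=
  ∏ j ∈ Finset.range k, (Nat.fib (m - j) : ℝ) / (Nat.fib (j + 1) : ℝ)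

/-- The polynomial `p_n^{(α)}(x)`. -/
noncomputable def fibPoly (α n : ℕ) (x : ℝ) : ℝ :=
  ∑ k ∈ Finset.range (n + 1),
    (-1 : ℝ) ^ (k * n - Nat.choose k 2) * fibinom n k * fibinom (α + n + k - 1) n * x ^ k

open Finset Polynomial

lemma choose_two_succ (k : ℕ) : (k + 1).choose 2 = k.choose 2 + k := by
  rw [Nat.choose_succ_succ', Nat.choose_one_right, add_comm]

lemma choose_two_mul_two_add (k : ℕ) : k * k = 2 * k.choose 2 + k := by
  induction k with
  | zero => rfl
  | succ k ih => rw [choose_two_succ]; linarith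

section QAnalogues

variable {K : Type*} [Field K] {q : K}

/-- The Gaussian binomial `[m, k]_q`; for `k > m` the factor `j = m` is `1 - q ^ 0 = 0`. -/
def qBinom (q : K) (m k : ℕ) : K :=
  ∏ j ∈ range k, (1 - q ^ (m - j)) / (1 - q ^ (j + 1))

/-- `(a; q)_n`. -/
def qPochhammer (a q : K) (n : ℕ) : K :=
  ∏ i ∈ range n, (1 - a * q ^ i)

@[simp]
lemma qBinom_zero_right (q : K) (m : ℕ) : qBinom q m 0 = 1 :=
  prod_range_zero _

lemma qBinom_eq_zero_of_lt (q : K) {m k : ℕ} (h : m < k) : qBinom q m k = 0 :=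
  prod_eq_zero (mem_range.2 h) (by simp)

lemma qPochhammer_succ (a q : K) (n : ℕ) :
    qPochhammer a q (n + 1) = qPochhammer a q n * (1 - a * q ^ n) :=
  prod_range_succ _ _

lemma qPochhammer_succ' (a q : K) (n : ℕ) :
    qPochhammer a q (n + 1) = (1 - a) * qPochhammer (a * q) q n := by
  rw [qPochhammer, prod_range_succ', pow_zero, mul_one, mul_comm, qPochhammer]
  simp only [pow_succ, mul_assoc, mul_comm q]

lemma pow_succ_ne_one (hq : ¬IsOfFinOrder q) (j : ℕ) : q ^ (j + 1) ≠ 1 :=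
  fun h => hq <| isOfFinOrder_iff_pow_eq_one.2 ⟨j + 1, j.succ_pos, h⟩

lemma one_sub_pow_succ_ne_zero (hq : ¬IsOfFinOrder q) (j : ℕ) : 1 - q ^ (j + 1) ≠ 0 :=
  sub_ne_zero.2 (pow_succ_ne_one hq j).symm

lemma qPochhammer_self_ne_zero (hq : ¬IsOfFinOrder q) (n : ℕ) : qPochhammer q q n ≠ 0 :=
  prod_ne_zero_iff.2 fun i _ => by rw [← pow_succ']; exact one_sub_pow_succ_ne_zero hq i

lemma qBinom_succ_right (q : K) (m k : ℕ) :
    qBinom q m (k + 1) = qBinom q m k * ((1 - q ^ (m - k)) / (1 - q ^ (k + 1))) :=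
  prod_range_succ _ _

lemma qBinom_succ_left_mul (q : K) (n k : ℕ) :
    qBinom q (n + 1) k * (1 - q ^ (n + 1 - k)) = (1 - q ^ (n + 1)) * qBinom q n k := by
  induction k with
  | zero => simp [mul_comm]
  | succ k ih =>
    rw [qBinom_succ_right, qBinom_succ_right, Nat.add_sub_add_right]
    linear_combination (1 - q ^ (n - k)) / (1 - q ^ (k + 1)) * ih

lemma qBinom_succ_succ (q : K) (n k : ℕ) (hq : q ^ (k + 1) ≠ 1) :
    qBinom q (n + 1) (k + 1) = qBinom q n (k + 1) + q ^ (n - k) * qBinom q n k := by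
  rcases lt_or_ge n k with hnk | hkn
  · rw [qBinom_eq_zero_of_lt q (by omega : n + 1 < k + 1), qBinom_eq_zero_of_lt q (by omega),
      qBinom_eq_zero_of_lt q hnk, mul_zero, add_zero]
  have hk : 1 - q ^ (k + 1) ≠ 0 := sub_ne_zero.2 hq.symm
  have hpow : q ^ (n - k) * q ^ (k + 1) = q ^ (n + 1) := by rw [← pow_add]; congr 1; omega
  rw [qBinom_succ_right, qBinom_succ_right]
  field_simp
  linear_combination qBinom_succ_left_mul q n k + qBinom q n k * hpow

lemma qBinom_self (hq : ¬IsOfFinOrder q) (n : ℕ) : qBinom q n n = 1 := by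
  induction n with
  | zero => simp
  | succ n ih =>
    rw [qBinom_succ_succ q n n (pow_succ_ne_one hq n),
      qBinom_eq_zero_of_lt q n.lt_succ_self, ih, Nat.sub_self, pow_zero, zero_add, mul_one]

theorem sum_qBinom_mul_pow (hq : ¬IsOfFinOrder q) (n : ℕ) (t : K) :
    ∑ k ∈ range (n + 1), (-1) ^ k * q ^ k.choose 2 * qBinom q n k * t ^ k =
      qPochhammer t q n := by
  induction n with
  | zero => simp [qPochhammer]
  | succ n ih =>
    set a : ℕ → ℕ → K := fun m k => (-1) ^ k * q ^ k.choose 2 * qBinom q m k * t ^ k with ha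
    have hstep : ∀ k ∈ range (n + 1), a (n + 1) (k + 1) = a n (k + 1) - t * q ^ n * a n k := by
      intro k hk
      have hpow : q ^ k * q ^ (n - k) = q ^ n := by
        rw [← pow_add]; congr 1; have := mem_range.1 hk; omega
      simp only [ha, qBinom_succ_succ q n k (pow_succ_ne_one hq k), choose_two_succ]
      linear_combination (-1) ^ (k + 1) * q ^ k.choose 2 * qBinom q n k * t ^ (k + 1) * hpow
    have hshift := sum_range_succ' (a n) (n + 1)
    rw [sum_range_succ, show a n (n + 1) = 0 by simp [ha, qBinom_eq_zero_of_lt q n.lt_succ_self],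
      add_zero, ih] at hshift
    rw [sum_range_succ', sum_congr rfl hstep, sum_sub_distrib, ← mul_sum, ih, qPochhammer_succ]
    simp only [ha, qBinom_zero_right, Nat.choose_zero_succ, pow_zero] at hshift ⊢
    linear_combination -hshift

/-- By the q-binomial theorem the monomial `z ^ s` contributes `(q ^ (s + 1 - n); q)_n`, whose
factor `i = n - 1 - s` vanishes. -/
theorem sum_qBinom_mul_eval_eq_zero (hq0 : q ≠ 0) (hq : ¬IsOfFinOrder q) {n : ℕ} {f : K[X]}
    (hf : f.degree < n) :
    ∑ k ∈ range (n + 1),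
      (-1) ^ k * q ^ k.choose 2 * qBinom q n k * (q / q ^ n) ^ k * f.eval (q ^ k) = 0 := by
  rcases eq_or_ne f 0 with rfl | hf0
  · simp
  have hdeg : f.natDegree < n := (natDegree_lt_iff_degree_lt hf0).2 hf
  simp_rw [eval_eq_sum_range' hdeg, mul_sum]
  rw [sum_comm]
  refine sum_eq_zero fun s hs => ?_
  have hs : s < n := mem_range.1 hs
  calc ∑ k ∈ range (n + 1),
        (-1) ^ k * q ^ k.choose 2 * qBinom q n k * (q / q ^ n) ^ k * (f.coeff s * (q ^ k) ^ s)
      = f.coeff s * ∑ k ∈ range (n + 1),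
          (-1) ^ k * q ^ k.choose 2 * qBinom q n k * (q ^ (s + 1) / q ^ n) ^ k := by
        rw [mul_sum]
        refine sum_congr rfl fun k _ => ?_
        rw [← pow_mul, mul_comm k s, pow_mul, div_pow, div_pow, pow_succ, mul_pow]
        ring
    _ = 0 := by
        rw [sum_qBinom_mul_pow hq]
        refine mul_eq_zero_of_right _ (prod_eq_zero (mem_range.2 (by omega : n - 1 - s < n)) ?_)
        rw [div_mul_eq_mul_div, ← pow_add, show s + 1 + (n - 1 - s) = n by omega,
          div_self (pow_ne_zero _ hq0), sub_self]

theorem sum_qBinom_div_one_sub (hq : ¬IsOfFinOrder q) (n : ℕ) {x : K}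
    (hx : qPochhammer x q (n + 1) ≠ 0) :
    ∑ k ∈ range (n + 1), (-1) ^ k * q ^ k.choose 2 * qBinom q n k * q ^ k / (1 - x * q ^ k) =
      qPochhammer q q n / qPochhammer x q (n + 1) := by
  induction n generalizing x with
  | zero => simp [qPochhammer]
  | succ n ih =>
    set a : ℕ → ℕ → K → K := fun m k y =>
      (-1) ^ k * q ^ k.choose 2 * qBinom q m k * q ^ k / (1 - y * q ^ k) with ha
    have hstep : ∀ k ∈ range (n + 1),
        a (n + 1) (k + 1) x = a n (k + 1) x - q ^ (n + 1) * a n k (x * q) := by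
      intro k hk
      have hpow : q ^ k * q ^ (n - k) * q ^ (k + 1) = q ^ (n + 1) * q ^ k := by
        rw [← pow_add, ← pow_add, ← pow_add]; congr 1; have := mem_range.1 hk; omega
      simp only [ha, qBinom_succ_succ q n k (pow_succ_ne_one hq k), choose_two_succ]
      rw [show x * q * q ^ k = x * q ^ (k + 1) by ring]
      linear_combination
        (-1) ^ (k + 1) * q ^ k.choose 2 * qBinom q n k / (1 - x * q ^ (k + 1)) * hpow
    have hshift := sum_range_succ' (fun k => a n k x) (n + 1)
    rw [sum_range_succ, show a n (n + 1) x = 0 by simp [ha, qBinom_eq_zero_of_lt q n.lt_succ_self],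
      add_zero] at hshift
    have hA : qPochhammer x q (n + 1) ≠ 0 := left_ne_zero_of_mul (qPochhammer_succ x q _ ▸ hx)
    have hB : qPochhammer (x * q) q (n + 1) ≠ 0 :=
      right_ne_zero_of_mul (qPochhammer_succ' x q _ ▸ hx)
    have hAB := (qPochhammer_succ x q (n + 1)).symm.trans (qPochhammer_succ' x q (n + 1))
    have h1 : 1 - x * q ^ (n + 1) ≠ 0 := right_ne_zero_of_mul (qPochhammer_succ x q _ ▸ hx)
    have hfin : ∑ k ∈ range (n + 1 + 1), a (n + 1) k x = ∑ k ∈ range (n + 1), a n k x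
        - q ^ (n + 1) * ∑ k ∈ range (n + 1), a n k (x * q) := by
      rw [sum_range_succ', sum_congr rfl hstep, sum_sub_distrib, ← mul_sum, hshift]
      simp only [ha, qBinom_zero_right, Nat.choose_zero_succ, pow_zero]
      ring
    simp only [ha] at hfin ih
    rw [hfin, ih hA, ih hB, qPochhammer_succ q q n, qPochhammer_succ x q (n + 1), mul_div_assoc',
      div_sub_div _ _ hA hB, div_eq_div_iff (mul_ne_zero hA hB) (mul_ne_zero hA h1)]
    linear_combination -(qPochhammer q q n * q ^ (n + 1) * qPochhammer x q (n + 1)) * hAB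

lemma exists_degree_lt_forall_eval_eq (f : K[X]) {n : ℕ} (hf : f.degree ≤ n) {b : K}
    (hb : b ≠ 0) :
    ∃ g : K[X], g.degree < n ∧
      ∀ z, f.eval z = f.eval b⁻¹ * (b * z) ^ n + (z - b⁻¹) * g.eval z := by
  set h := f - C (f.eval b⁻¹) * (C b * X) ^ n
  have hroot : h.IsRoot b⁻¹ := by simp [h, hb]
  refine ⟨h /ₘ (X - C b⁻¹), ?_, fun z => ?_⟩
  · have hh : h.degree ≤ n := by
      refine (degree_sub_le _ _).trans (max_le hf ?_)
      compute_degree!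
    rcases eq_or_ne h 0 with h0 | h0
    · simp [h0]
    · exact (degree_divByMonic_lt h _ h0 (by rw [degree_X_sub_C]; exact zero_lt_one)).trans_le hh
  · have := congrArg (eval z) (mul_divByMonic_eq_iff_isRoot.2 hroot)
    simp only [eval_mul, eval_sub, eval_X, eval_C, eval_pow, h] at this
    linear_combination -this

/-- The part `(z - b⁻¹) g(z)` of the decomposition above is killed by
`sum_qBinom_mul_eval_eq_zero`; the part `(b z) ^ n` leaves `sum_qBinom_div_one_sub`. -/
theorem sum_qBinom_mul_eval_div_one_sub (hq0 : q ≠ 0) (hq : ¬IsOfFinOrder q) {n : ℕ} {b : K}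
    (hb0 : b ≠ 0) (hb : qPochhammer b q (n + 1) ≠ 0) {f : K[X]} (hf : f.degree ≤ n) :
    ∑ k ∈ range (n + 1), (-1) ^ k * q ^ k.choose 2 * qBinom q n k * (q / q ^ n) ^ k *
        f.eval (q ^ k) / (1 - b * q ^ k) =
      f.eval b⁻¹ * b ^ n * qPochhammer q q n / qPochhammer b q (n + 1) := by
  obtain ⟨g, hg, hfg⟩ := exists_degree_lt_forall_eval_eq f hf hb0
  have hterm : ∀ k ∈ range (n + 1),
      (-1) ^ k * q ^ k.choose 2 * qBinom q n k * (q / q ^ n) ^ k * f.eval (q ^ k) /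
          (1 - b * q ^ k) =
        f.eval b⁻¹ * b ^ n * ((-1) ^ k * q ^ k.choose 2 * qBinom q n k * q ^ k / (1 - b * q ^ k)) -
          b⁻¹ * ((-1) ^ k * q ^ k.choose 2 * qBinom q n k * (q / q ^ n) ^ k * g.eval (q ^ k)) := by
    intro k hk
    have hbk : 1 - b * q ^ k ≠ 0 := prod_ne_zero_iff.1 hb k hk
    have hqk : (q / q ^ n) ^ k * (q ^ k) ^ n = q ^ k := by
      rw [← pow_mul, mul_comm k n, pow_mul, ← mul_pow, div_mul_cancel₀ _ (pow_ne_zero _ hq0)]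
    have hsub : q ^ k - b⁻¹ = -b⁻¹ * (1 - b * q ^ k) := by field_simp; ring
    rw [hfg, mul_pow, hsub]
    generalize (q / q ^ n) ^ k = r at hqk ⊢
    generalize f.eval b⁻¹ = F
    generalize g.eval (q ^ k) = G
    generalize q ^ k = z at hqk hbk ⊢
    field_simp
    linear_combination qBinom q n k * F * b ^ n * b * hqk
  rw [sum_congr rfl hterm, sum_sub_distrib, ← mul_sum, ← mul_sum, sum_qBinom_div_one_sub hq n hb,
    sum_qBinom_mul_eval_eq_zero hq0 hq hg, mul_zero, sub_zero, mul_div_assoc']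

lemma qBinom_add_self_mul (hq : ¬IsOfFinOrder q) (c n : ℕ) :
    qBinom q (c + n) n * qPochhammer q q n = qPochhammer (q ^ (c + 1)) q n := by
  rw [qBinom, qPochhammer, ← prod_mul_distrib, qPochhammer,
    ← prod_range_reflect (fun j => 1 - q ^ (c + 1) * q ^ j)]
  refine prod_congr rfl fun j hj => ?_
  rw [← pow_succ', div_mul_cancel₀ _ (one_sub_pow_succ_ne_zero hq j), ← pow_add]
  congr 2
  have := mem_range.1 hj
  omega

lemma qPochhammer_inv_pow_eq_zero (hq0 : q ≠ 0) {l n : ℕ} (h : l < n) :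
    qPochhammer (q ^ l)⁻¹ q n = 0 :=
  prod_eq_zero (mem_range.2 h) (by rw [inv_mul_cancel₀ (pow_ne_zero _ hq0), sub_self])

lemma qPochhammer_inv_pow_self_mul (hq0 : q ≠ 0) (n : ℕ) :
    qPochhammer (q ^ n)⁻¹ q n * q ^ (n + 1).choose 2 = (-1) ^ n * qPochhammer q q n := by
  have hrefl : qPochhammer (q ^ n)⁻¹ q n = ∏ i ∈ range n, (1 - (q ^ (i + 1))⁻¹) := by
    rw [qPochhammer, ← prod_range_reflect]
    refine prod_congr rfl fun i hi => ?_
    rw [show q ^ n = q ^ (n - 1 - i) * q ^ (i + 1) by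
        rw [← pow_add]; congr 1; have := mem_range.1 hi; omega,
      mul_inv, mul_right_comm, inv_mul_cancel₀ (pow_ne_zero _ hq0), one_mul]
  have hprod : ∀ m, (∏ i ∈ range m, (1 - (q ^ (i + 1))⁻¹)) * q ^ (m + 1).choose 2 =
      (-1) ^ m * qPochhammer q q m := by
    intro m
    induction m with
    | zero => simp [qPochhammer]
    | succ m ih =>
      rw [prod_range_succ, qPochhammer_succ, choose_two_succ, pow_add, ← pow_succ']
      have hm : (q ^ (m + 1))⁻¹ * q ^ (m + 1) = 1 := inv_mul_cancel₀ (pow_ne_zero _ hq0)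
      linear_combination (1 - (q ^ (m + 1))⁻¹) * q ^ (m + 1) * ih
        - (-1) ^ m * qPochhammer q q m * hm
  rw [hrefl, hprod]

lemma eval_prod_one_sub_C_mul_X (a q z : K) (n : ℕ) :
    (∏ i ∈ range n, (1 - C (a * q ^ i) * X)).eval z = qPochhammer (a * z) q n := by
  simp only [eval_prod, eval_sub, eval_one, eval_mul, eval_C, eval_X, qPochhammer]
  exact prod_congr rfl fun i _ => by ring

lemma degree_prod_one_sub_C_mul_X_le (a q : K) (n : ℕ) :
    (∏ i ∈ range n, (1 - C (a * q ^ i) * X)).degree ≤ (n : WithBot ℕ) := by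
  refine degree_le_of_natDegree_le ((natDegree_prod_le _ _).trans ?_)
  refine (sum_le_sum fun i _ => (?_ : (1 - C (a * q ^ i) * X).natDegree ≤ 1)).trans (by simp)
  compute_degree

theorem sum_qBinom_mul_qPochhammer_div_one_sub (hq0 : q ≠ 0) (hq : ¬IsOfFinOrder q) {a : K}
    (ha : a ≠ 0) (n l : ℕ) (h : qPochhammer (a * q ^ l) q (n + 1) ≠ 0) :
    ∑ k ∈ range (n + 1), (-1) ^ k * q ^ k.choose 2 * qBinom q n k * (q / q ^ n) ^ k *
        qPochhammer (a * q ^ k) q n / (1 - a * q ^ l * q ^ k) =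
      qPochhammer (q ^ l)⁻¹ q n * (a * q ^ l) ^ n * qPochhammer q q n /
        qPochhammer (a * q ^ l) q (n + 1) := by
  have := sum_qBinom_mul_eval_div_one_sub hq0 hq (mul_ne_zero ha (pow_ne_zero l hq0)) h
    (degree_prod_one_sub_C_mul_X_le a q n)
  simp only [eval_prod_one_sub_C_mul_X] at this
  rwa [mul_inv, ← mul_assoc, mul_inv_cancel₀ ha, one_mul] at this

end QAnalogues

lemma hasSum_pow_mul_sum_mul_pow {𝕜 : Type*} [NormedField 𝕜] {r s : 𝕜} (hr : ‖r‖ < 1)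
    (hs : ‖s‖ ≤ 1) (u : ℕ → 𝕜) (N : ℕ) :
    HasSum (fun j => r ^ j * ∑ k ∈ range N, u k * (s ^ j) ^ k)
      (∑ k ∈ range N, u k / (1 - r * s ^ k)) := by
  have hgeom : ∀ k ∈ range N, HasSum (fun j => u k * (r * s ^ k) ^ j) (u k / (1 - r * s ^ k)) :=
    fun k _ => by
      rw [div_eq_mul_inv]
      refine (hasSum_geometric_of_norm_lt_one ?_).mul_left (u k)
      rw [norm_mul, norm_pow]
      exact (mul_le_of_le_one_right (norm_nonneg r) (pow_le_one₀ (norm_nonneg s) hs)).trans_lt hr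
  convert hasSum_sum hgeom using 1
  funext j
  rw [mul_sum]
  refine sum_congr rfl fun k _ => ?_
  rw [mul_pow, ← pow_mul, ← pow_mul, mul_comm k j]
  ring

section Fibonacci

open Real
open scoped goldenRatio

lemma goldenPhi_eq : goldenPhi = φ := rfl

lemma goldenConj_eq_goldenPhi_mul_fibQ : ψ = goldenPhi * fibQ := by
  rw [goldenPhi, fibQ, goldenConj]
  field_simp

lemma goldenPhi_sq_mul_fibQ : goldenPhi ^ 2 * fibQ = -1 := by
  rw [sq, mul_assoc, ← goldenConj_eq_goldenPhi_mul_fibQ]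
  exact goldenRatio_mul_goldenConj

lemma goldenPhi_ne_zero : goldenPhi ≠ 0 := goldenRatio_ne_zero

lemma fibQ_ne_zero : fibQ ≠ 0 :=
  right_ne_zero_of_mul (goldenPhi_sq_mul_fibQ ▸ neg_ne_zero.2 one_ne_zero)

lemma abs_fibQ_lt_one : |fibQ| < 1 := by
  have hq : fibQ = -ψ ^ 2 := by
    calc fibQ = goldenPhi⁻¹ * ψ := by
          rw [goldenConj_eq_goldenPhi_mul_fibQ, inv_mul_cancel_left₀ goldenPhi_ne_zero]
      _ = -ψ ^ 2 := by rw [goldenPhi_eq, inv_goldenRatio]; ring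
  rw [hq, abs_neg, abs_pow, sq_abs]
  nlinarith [neg_one_lt_goldenConj, goldenConj_neg]

lemma not_isOfFinOrder_fibQ : ¬IsOfFinOrder fibQ := fun h =>
  abs_fibQ_lt_one.ne (h.norm_eq_one)

lemma one_sub_fibQ_pow_ne_zero {j : ℕ} (hj : j ≠ 0) : 1 - fibQ ^ j ≠ 0 := by
  obtain ⟨i, rfl⟩ := Nat.exists_eq_succ_of_ne_zero hj
  exact one_sub_pow_succ_ne_zero not_isOfFinOrder_fibQ i

lemma qPochhammer_fibQ_pow_mul_ne_zero {a : ℕ} (ha : a ≠ 0) (l n : ℕ) :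
    qPochhammer (fibQ ^ a * fibQ ^ l) fibQ n ≠ 0 :=
  prod_ne_zero_iff.2 fun i _ => by
    rw [← pow_add, ← pow_add]; exact one_sub_fibQ_pow_ne_zero (by omega)

lemma coe_fib_eq_goldenPhi_pow_mul (j : ℕ) :
    (Nat.fib j : ℝ) = goldenPhi ^ j * (1 - fibQ ^ j) / √5 := by
  rw [coe_fib_eq, goldenConj_eq_goldenPhi_mul_fibQ, mul_pow, ← goldenPhi_eq]
  ring

lemma fibinom_succ (m k : ℕ) :
    fibinom m (k + 1) = fibinom m k * ((Nat.fib (m - k) : ℝ) / Nat.fib (k + 1)) :=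
  prod_range_succ _ _

lemma fibinom_eq_goldenPhi_pow_mul_qBinom {m k : ℕ} (hk : k ≤ m) :
    fibinom m k = goldenPhi ^ (k * (m - k)) * qBinom fibQ m k := by
  induction k with
  | zero => simp [fibinom]
  | succ k ih =>
    have hmk : m - k = m - (k + 1) + 1 := by omega
    have hq : 1 - fibQ ^ (k + 1) ≠ 0 := one_sub_pow_succ_ne_zero not_isOfFinOrder_fibQ k
    have hφ := goldenPhi_ne_zero
    rw [fibinom_succ, ih (by omega), qBinom_succ_right, coe_fib_eq_goldenPhi_pow_mul,
      coe_fib_eq_goldenPhi_pow_mul, hmk]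
    field_simp
    ring

lemma fibQ_pow (j : ℕ) : fibQ ^ j = (-1) ^ j / goldenPhi ^ (2 * j) := by
  rw [eq_div_iff (pow_ne_zero _ goldenPhi_ne_zero), pow_mul, ← mul_pow, mul_comm,
    goldenPhi_sq_mul_fibQ]

lemma fibPoly_div_goldenPhi {α : ℕ} (hα : 1 ≤ α) (n : ℕ) (z : ℝ) :
    fibPoly α n (z / goldenPhi) = goldenPhi ^ (n * (α - 1)) / qPochhammer fibQ fibQ n *
      ∑ k ∈ range (n + 1), (-1) ^ k * fibQ ^ k.choose 2 * qBinom fibQ n k *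
        (fibQ / fibQ ^ n) ^ k * qPochhammer (fibQ ^ α * fibQ ^ k) fibQ n * z ^ k := by
  obtain ⟨e, rfl⟩ : ∃ e, α = e + 1 := ⟨α - 1, by omega⟩
  rw [fibPoly, mul_sum]
  refine sum_congr rfl fun k hk => ?_
  obtain ⟨d, rfl⟩ := exists_add_of_le (mem_range_succ_iff.1 hk)
  have hP := qBinom_add_self_mul not_isOfFinOrder_fibQ (e + k) (k + d)
  have hc := choose_two_mul_two_add k
  -- Write every exponent in the atoms `k.choose 2`, `k`, `k * d`, `(k + d) * e`, so that after
  -- substituting `fibQ = -1 / φ ^ 2` what is left is a ring identity.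
  rw [show e + 1 + (k + d) + k - 1 = e + k + (k + d) by omega,
    fibinom_eq_goldenPhi_pow_mul_qBinom (Nat.le_add_right k d),
    fibinom_eq_goldenPhi_pow_mul_qBinom (Nat.le_add_left (k + d) (e + k)),
    ← pow_add fibQ (e + 1) k, show e + 1 + k = e + k + 1 by ring, ← hP,
    Nat.add_sub_cancel_left, Nat.add_sub_cancel, Nat.add_sub_cancel,
    show k * (k + d) - k.choose 2 = k.choose 2 + k + k * d by rw [mul_add]; omega,
    div_pow fibQ, ← pow_mul, show (k + d) * k = 2 * k.choose 2 + k + k * d by linarith,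
    show (k + d) * (e + k) = (k + d) * e + 2 * k.choose 2 + k + k * d by linarith,
    fibQ_pow (k.choose 2), fibQ_pow k, fibQ_pow (2 * k.choose 2 + k + k * d)]
  have hφ := goldenPhi_ne_zero
  have hpoch := qPochhammer_self_ne_zero not_isOfFinOrder_fibQ (k + d)
  rw [div_pow z]
  simp only [pow_add, pow_mul, neg_one_sq, one_pow, one_mul]
  field_simp
  ring_nf
  rw [Even.neg_one_pow ⟨k * d, by ring⟩, mul_one]

lemma hasSum_fibQ_pow_mul_fibPoly_mul_pow {α : ℕ} (hα : 1 ≤ α) (n l : ℕ) :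
    HasSum (fun j => fibQ ^ (α * j) * fibPoly α n (fibQ ^ j / goldenPhi) * (fibQ ^ j) ^ l)
      (goldenPhi ^ (n * (α - 1)) * qPochhammer (fibQ ^ l)⁻¹ fibQ n * (fibQ ^ α * fibQ ^ l) ^ n /
        qPochhammer (fibQ ^ α * fibQ ^ l) fibQ (n + 1)) := by
  have hr : ‖fibQ ^ α * fibQ ^ l‖ < 1 := by
    rw [← pow_add, norm_pow, Real.norm_eq_abs]
    exact pow_lt_one₀ (abs_nonneg _) abs_fibQ_lt_one (by omega)
  have hpoch := qPochhammer_fibQ_pow_mul_ne_zero (by omega : α ≠ 0) l (n + 1)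
  have hmom := (hasSum_pow_mul_sum_mul_pow hr (abs_fibQ_lt_one.le) (fun k =>
      (-1) ^ k * fibQ ^ k.choose 2 * qBinom fibQ n k * (fibQ / fibQ ^ n) ^ k *
        qPochhammer (fibQ ^ α * fibQ ^ k) fibQ n) (n + 1)).mul_left
    (goldenPhi ^ (n * (α - 1)) / qPochhammer fibQ fibQ n)
  rw [sum_qBinom_mul_qPochhammer_div_one_sub fibQ_ne_zero not_isOfFinOrder_fibQ
    (pow_ne_zero α fibQ_ne_zero) n l hpoch] at hmom
  have hpoch_self := qPochhammer_self_ne_zero not_isOfFinOrder_fibQ n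
  have hval : goldenPhi ^ (n * (α - 1)) * qPochhammer (fibQ ^ l)⁻¹ fibQ n *
      (fibQ ^ α * fibQ ^ l) ^ n / qPochhammer (fibQ ^ α * fibQ ^ l) fibQ (n + 1) =
      goldenPhi ^ (n * (α - 1)) / qPochhammer fibQ fibQ n *
        (qPochhammer (fibQ ^ l)⁻¹ fibQ n * (fibQ ^ α * fibQ ^ l) ^ n * qPochhammer fibQ fibQ n /
          qPochhammer (fibQ ^ α * fibQ ^ l) fibQ (n + 1)) := by
    field_simp
  rw [hval]
  refine hmom.congr_fun fun j => ?_
  rw [fibPoly_div_goldenPhi hα, mul_pow, ← pow_mul, ← pow_mul, ← pow_mul, mul_comm l j]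
  ring

lemma hasSum_fibQ_pow_mul_fibPoly_mul_fibPoly {α : ℕ} (hα : 1 ≤ α) (n m : ℕ) :
    HasSum (fun j => fibQ ^ (α * j) * fibPoly α n (fibQ ^ j / goldenPhi) *
        fibPoly α m (fibQ ^ j / goldenPhi))
      (goldenPhi ^ (m * (α - 1)) / qPochhammer fibQ fibQ m *
        ∑ l ∈ range (m + 1), (-1) ^ l * fibQ ^ l.choose 2 * qBinom fibQ m l *
          (fibQ / fibQ ^ m) ^ l * qPochhammer (fibQ ^ α * fibQ ^ l) fibQ m *
          (goldenPhi ^ (n * (α - 1)) * qPochhammer (fibQ ^ l)⁻¹ fibQ n *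
            (fibQ ^ α * fibQ ^ l) ^ n / qPochhammer (fibQ ^ α * fibQ ^ l) fibQ (n + 1))) := by
  refine ((hasSum_sum fun l _ => (hasSum_fibQ_pow_mul_fibPoly_mul_pow hα n l).mul_left _).mul_left
    _).congr_fun fun j => ?_
  simp only [fibPoly_div_goldenPhi hα m, mul_sum]
  refine sum_congr rfl fun l _ => ?_
  ring

lemma hasSum_fibQ_pow_mul_fibPoly_mul_fibPoly_of_lt {α n m : ℕ} (hα : 1 ≤ α) (hmn : m < n) :
    HasSum (fun j => fibQ ^ (α * j) * fibPoly α n (fibQ ^ j / goldenPhi) *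
      fibPoly α m (fibQ ^ j / goldenPhi)) 0 := by
  have h := hasSum_fibQ_pow_mul_fibPoly_mul_fibPoly hα n m
  rwa [sum_eq_zero fun l hl => by
    rw [qPochhammer_inv_pow_eq_zero fibQ_ne_zero (by have := mem_range.1 hl; omega)]; simp,
    mul_zero] at h

lemma hasSum_fibQ_pow_mul_fibPoly_mul_self {α : ℕ} (hα : 1 ≤ α) (n : ℕ) :
    HasSum (fun j => fibQ ^ (α * j) * fibPoly α n (fibQ ^ j / goldenPhi) *
      fibPoly α n (fibQ ^ j / goldenPhi))
      ((-1) ^ (α * n) * ((Nat.fib α : ℝ) / Nat.fib (α + 2 * n)) / (1 - fibQ ^ α)) := by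
  have h := hasSum_fibQ_pow_mul_fibPoly_mul_fibPoly hα n n
  rw [sum_range_succ, sum_eq_zero fun l hl => by
    rw [qPochhammer_inv_pow_eq_zero fibQ_ne_zero (mem_range.1 hl)]; simp, zero_add] at h
  convert h using 1
  obtain ⟨e, rfl⟩ : ∃ e, α = e + 1 := ⟨α - 1, by omega⟩
  have hq := fibQ_ne_zero
  have hφ := goldenPhi_ne_zero
  have hpoch := qPochhammer_self_ne_zero not_isOfFinOrder_fibQ n
  have hpoch' := qPochhammer_fibQ_pow_mul_ne_zero (Nat.succ_ne_zero e) n n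
  have h1 := one_sub_fibQ_pow_ne_zero (j := e + 1) (by omega)
  have h2 := one_sub_fibQ_pow_ne_zero (j := e + 1 + 2 * n) (by omega)
  have hP : qPochhammer (fibQ ^ n)⁻¹ fibQ n =
      (-1) ^ n * qPochhammer fibQ fibQ n / fibQ ^ (n.choose 2 + n) := by
    rw [eq_div_iff (pow_ne_zero _ hq), ← choose_two_succ, qPochhammer_inv_pow_self_mul hq]
  have hφq : goldenPhi ^ (2 * ((e + 1) * n)) * fibQ ^ ((e + 1) * n) = (-1) ^ ((e + 1) * n) := by
    rw [pow_mul, ← mul_pow, goldenPhi_sq_mul_fibQ]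
  have hvalue : (-1) ^ ((e + 1) * n) * ((Nat.fib (e + 1) : ℝ) / Nat.fib (e + 1 + 2 * n)) /
      (1 - fibQ ^ (e + 1)) = goldenPhi ^ (2 * (n * e)) * fibQ ^ ((e + 1) * n) /
        (1 - fibQ ^ (e + 1 + 2 * n)) := by
    rw [coe_fib_eq_goldenPhi_pow_mul, coe_fib_eq_goldenPhi_pow_mul, ← hφq]
    field_simp
    ring
  rw [hvalue, qBinom_self not_isOfFinOrder_fibQ, hP, qPochhammer_succ,
    show fibQ ^ (e + 1) * fibQ ^ n * fibQ ^ n = fibQ ^ (e + 1 + 2 * n) by ring, Nat.add_sub_cancel,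
    div_pow fibQ, mul_pow, ← pow_mul, ← pow_mul]
  generalize qPochhammer (fibQ ^ (e + 1) * fibQ ^ n) fibQ n = Q at hpoch' ⊢
  field_simp
  ring_nf
  rw [Even.neg_one_pow ⟨n, by ring⟩, mul_one]

end Fibonacci

theorem fibPoly_orthogonality (α : ℕ) (hα : 1 ≤ α) (n m : ℕ) :
    (1 - fibQ ^ α) *
        ∑' j : ℕ, fibQ ^ (α * j) * fibPoly α n (fibQ ^ j / goldenPhi) *
          fibPoly α m (fibQ ^ j / goldenPhi) =
      if n = m then (-1 : ℝ) ^ (α * n) * ((Nat.fib α : ℝ) / (Nat.fib (α + 2 * n) : ℝ))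
      else 0 := by
  rcases lt_trichotomy m n with hmn | rfl | hnm
  · rw [if_neg hmn.ne', (hasSum_fibQ_pow_mul_fibPoly_mul_fibPoly_of_lt hα hmn).tsum_eq, mul_zero]
  · rw [if_pos rfl, (hasSum_fibQ_pow_mul_fibPoly_mul_self hα m).tsum_eq,
      mul_div_cancel₀ _ (one_sub_fibQ_pow_ne_zero (by omega))]
  · rw [if_neg hnm.ne, ((hasSum_fibQ_pow_mul_fibPoly_mul_fibPoly_of_lt hα hnm).congr_fun
      fun j => mul_right_comm _ _ _).tsum_eq, mul_zero]
end

section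
/- For α ∈ ℕ with α ≥ 1 and n ≥ 0, the (i,j)-entry of the inverse of the (n+1)×(n+1) matrix (1/F_{α+i+j})_{0≤i,j≤n} equals (-1)^{n(α+i+j) - binom(i,2) - binom(j,2)} · F_{α+i+j} · binom(α+n+i, n-j)_F · binom(α+n+j, n-i)_F · binom(α+i+j-1, i)_F · binom(α+i+j-1, j)_F. In particular all entries of the inverse matrix are integers. -/
/-!
Put `w m = (F_m, F_{m+1})`. By d'Ocagne's identity `F_a F_{b+1} - F_{a+1} F_b = (-1)^b F_{a-b}`,
the determinant of `w (α + n + i)` and `±w (n - j)` is `F_{α+i+j}`, so the Filbert matrix is a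
Cauchy matrix `(1 / det (u_i, v_j))` of points of the projective line. Such a matrix has an
explicit inverse (from Lagrange interpolation in an affine chart), whose entries are products of
determinants `det (u_l, u_k)`, `det (v_j, v_k)`, `det (u_k, v_j)`, i.e. of signed Fibonacci
numbers. Collecting them gives the fibonomial formula; integrality follows from the Fibonacci
analogue of Pascal's rule.
-/

open Finset

section Cauchy

variable {K ι : Type*} [Field K]

def cross (u v : K × K) : K := u.1 * v.2 - u.2 * v.1

def ratio (u : K × K) : K := u.1 / u.2

theorem cross_swap (u v : K × K) : cross v u = -cross u v := by
  simp only [cross]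
  ring

theorem cross_smul_left (u v : K × K) (c : K) : cross (c • u) v = c * cross u v := by
  simp only [cross, Prod.smul_fst, Prod.smul_snd, smul_eq_mul]
  ring

theorem cross_smul_right (u v : K × K) (c : K) : cross u (c • v) = c * cross u v := by
  simp only [cross, Prod.smul_fst, Prod.smul_snd, smul_eq_mul]
  ring

theorem cross_eq_mul_sub {u v : K × K} (hu : u.2 ≠ 0) (hv : v.2 ≠ 0) :
    cross u v = u.2 * v.2 * (ratio u - ratio v) := by
  simp only [cross, ratio]
  field_simp

theorem ratio_ne_of_cross_ne_zero {u v : K × K} (hu : u.2 ≠ 0) (hv : v.2 ≠ 0)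
    (h : cross u v ≠ 0) : ratio u ≠ ratio v := fun he =>
  h (by rw [cross_eq_mul_sub hu hv, he, sub_self, mul_zero])

theorem prod_cross_eq (p : K × K) (w : ι → K × K) (S : Finset ι) (hp : p.2 ≠ 0)
    (hw : ∀ k, (w k).2 ≠ 0) :
    ∏ k ∈ S, cross p (w k) =
      p.2 ^ #S * (∏ k ∈ S, (w k).2) * ∏ k ∈ S, (ratio p - ratio (w k)) := by
  rw [prod_congr rfl fun k _ => cross_eq_mul_sub hp (hw k), prod_mul_distrib, prod_mul_distrib,
    prod_const]

variable [Fintype ι] [DecidableEq ι]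

def cauchyInv (x y : ι → K) : Matrix ι ι K :=
  Matrix.of fun j l => (∏ k ∈ univ.erase l, (y j - x k)) * (∏ k, (x l - y k)) /
    ((∏ k ∈ univ.erase j, (y j - y k)) * ∏ k ∈ univ.erase l, (x l - x k))

theorem sum_inv_sub_mul_lagrange_eq (x y : ι → K) (hy : Function.Injective y)
    (hxy : ∀ i j, x i ≠ y j) (i l : ι) :
    ∑ j, (x i - y j)⁻¹ *
        ((∏ k ∈ univ.erase l, (y j - x k)) / ∏ k ∈ univ.erase j, (y j - y k)) =
      (∏ k ∈ univ.erase l, (x i - x k)) / ∏ k, (x i - y k) := by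
  -- `p` has degree `< #ι`, so it is its own Lagrange interpolant on the nodes `y`.
  set p : Polynomial K := Lagrange.nodal (univ.erase l) x
  have hp : ∀ t, p.eval t = ∏ k ∈ univ.erase l, (t - x k) := fun t => Lagrange.eval_nodal
  have hinterp : p = Lagrange.interpolate univ y fun j => p.eval (y j) := by
    refine Lagrange.eq_interpolate hy.injOn ?_
    rw [Lagrange.degree_nodal]
    exact_mod_cast card_erase_lt_of_mem (mem_univ l)
  have hxi : ∏ k, (x i - y k) ≠ 0 := prod_ne_zero_iff.mpr fun k _ => sub_ne_zero.mpr (hxy i k)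
  rw [eq_div_iff hxi, ← hp, hinterp, Lagrange.eval_interpolate_not_at_node _ fun j _ => hxy i j,
    Lagrange.eval_nodal, sum_mul, mul_sum]
  refine sum_congr rfl fun j _ => ?_
  rw [Lagrange.nodalWeight, hp, prod_inv_distrib]
  ring

theorem cauchy_mul_cauchyInv (x y : ι → K) (hx : Function.Injective x)
    (hy : Function.Injective y) (hxy : ∀ i j, x i ≠ y j) :
    Matrix.of (fun i j => (x i - y j)⁻¹) * cauchyInv x y = 1 := by
  ext i l
  have hxl : ∏ k ∈ univ.erase l, (x l - x k) ≠ 0 := prod_ne_zero_iff.mpr fun k hk =>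
    sub_ne_zero.mpr fun h => ne_of_mem_erase hk (hx h).symm
  have hxi : ∏ k, (x i - y k) ≠ 0 := prod_ne_zero_iff.mpr fun k _ => sub_ne_zero.mpr (hxy i k)
  calc ∑ j, (x i - y j)⁻¹ * cauchyInv x y j l
      = (∏ k, (x l - y k)) / (∏ k ∈ univ.erase l, (x l - x k)) *
          ∑ j, (x i - y j)⁻¹ *
            ((∏ k ∈ univ.erase l, (y j - x k)) / ∏ k ∈ univ.erase j, (y j - y k)) := by
        rw [mul_sum]
        exact sum_congr rfl fun j _ => by rw [cauchyInv, Matrix.of_apply]; ring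
    _ = (1 : Matrix ι ι K) i l := by
        rw [sum_inv_sub_mul_lagrange_eq x y hy hxy i l]
        rcases eq_or_ne i l with rfl | hil
        · rw [Matrix.one_apply_eq]
          field_simp
        · rw [Matrix.one_apply_ne hil, prod_eq_zero (f := fun k => x i - x k)
            (mem_erase.mpr ⟨hil, mem_univ i⟩) (sub_self _)]
          simp

theorem prod_cross_div_eq_mul_cauchyInv (u v : ι → K × K) (hu : ∀ i, (u i).2 ≠ 0)
    (hv : ∀ j, (v j).2 ≠ 0) (j l : ι) :
    (∏ k ∈ univ.erase l, cross (v j) (u k)) * (∏ k, cross (u l) (v k)) /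
        ((∏ k ∈ univ.erase j, cross (v j) (v k)) * ∏ k ∈ univ.erase l, cross (u l) (u k)) =
      (v j).2 * cauchyInv (fun i => ratio (u i)) (fun i => ratio (v i)) j l * (u l).2 := by
  have hN : #(univ : Finset ι) = #(univ.erase l) + 1 := (card_erase_add_one (mem_univ l)).symm
  have hU : ∏ k ∈ univ.erase l, (u k).2 ≠ 0 := prod_ne_zero_iff.mpr fun k _ => hu k
  have hV : ∏ k ∈ univ.erase j, (v k).2 ≠ 0 := prod_ne_zero_iff.mpr fun k _ => hv k
  have hvj := hv j
  have hul := hu l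
  rw [cauchyInv, Matrix.of_apply, prod_cross_eq _ _ _ hvj hu, prod_cross_eq _ _ _ hul hv,
    prod_cross_eq _ _ _ hvj hv, prod_cross_eq _ _ _ hul hu,
    ← mul_prod_erase univ (fun k => (v k).2) (mem_univ j), hN, pow_succ,
    card_erase_of_mem (mem_univ l), card_erase_of_mem (mem_univ j)]
  field_simp

theorem inv_of_inv_cross (u v : ι → K × K) (hu : ∀ i, (u i).2 ≠ 0)
    (hv : ∀ j, (v j).2 ≠ 0) (huu : Pairwise fun i k => cross (u i) (u k) ≠ 0)
    (hvv : Pairwise fun j k => cross (v j) (v k) ≠ 0) (huv : ∀ i j, cross (u i) (v j) ≠ 0) :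
    (Matrix.of fun i j => (cross (u i) (v j))⁻¹)⁻¹ = Matrix.of fun j l =>
      (∏ k ∈ univ.erase l, cross (v j) (u k)) * (∏ k, cross (u l) (v k)) /
        ((∏ k ∈ univ.erase j, cross (v j) (v k)) *
          ∏ k ∈ univ.erase l, cross (u l) (u k)) := by
  set s : ι → K := fun i => (u i).2
  set t : ι → K := fun j => (v j).2
  set x : ι → K := fun i => ratio (u i)
  set y : ι → K := fun j => ratio (v j)
  have hx : Function.Injective x := fun i k h => by
    by_contra hik
    exact ratio_ne_of_cross_ne_zero (hu i) (hu k) (huu hik) h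
  have hy : Function.Injective y := fun j k h => by
    by_contra hjk
    exact ratio_ne_of_cross_ne_zero (hv j) (hv k) (hvv hjk) h
  have hxy : ∀ i j, x i ≠ y j := fun i j => ratio_ne_of_cross_ne_zero (hu i) (hv j) (huv i j)
  -- In the chart `ratio`, the matrix is a Cauchy matrix scaled by two diagonal matrices.
  have hscale : Matrix.of (fun i j => (cross (u i) (v j))⁻¹) =
      Matrix.diagonal s⁻¹ * Matrix.of (fun i j => (x i - y j)⁻¹) *
        Matrix.diagonal t⁻¹ := by
    ext i j
    simp only [Matrix.diagonal_mul, Matrix.mul_diagonal, Matrix.of_apply, Pi.inv_apply,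
      cross_eq_mul_sub (hu i) (hv j), mul_inv]
    ring
  have hformula : Matrix.of (fun j l =>
      (∏ k ∈ univ.erase l, cross (v j) (u k)) * (∏ k, cross (u l) (v k)) /
        ((∏ k ∈ univ.erase j, cross (v j) (v k)) * ∏ k ∈ univ.erase l, cross (u l) (u k))) =
      Matrix.diagonal t * cauchyInv x y * Matrix.diagonal s := by
    ext j l
    simp only [Matrix.diagonal_mul, Matrix.mul_diagonal, Matrix.of_apply]
    exact prod_cross_div_eq_mul_cauchyInv u v hu hv j l
  have hdiag : ∀ r : ι → K, (∀ k, r k ≠ 0) →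
      Matrix.diagonal r⁻¹ * Matrix.diagonal r = 1 :=
    fun r hr => by
      rw [Matrix.diagonal_mul_diagonal, ← Matrix.diagonal_one]
      exact congrArg Matrix.diagonal (funext fun k => inv_mul_cancel₀ (hr k))
  refine Matrix.inv_eq_right_inv ?_
  rw [hscale, hformula]
  simp only [Matrix.mul_assoc]
  rw [← Matrix.mul_assoc (Matrix.diagonal t⁻¹), hdiag t hv, Matrix.one_mul,
    ← Matrix.mul_assoc (Matrix.of _), cauchy_mul_cauchyInv x y hx hy hxy, Matrix.one_mul,
    hdiag s hu]

end Cauchy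

theorem Fin.prod_erase_eq_prod_range_mul {M : Type*} [CommMonoid M] {n : ℕ} (f : ℕ → M)
    (l : Fin (n + 1)) :
    ∏ k ∈ univ.erase l, f k =
      (∏ k ∈ range l, f k) * ∏ r ∈ range (n - l), f (l + 1 + r) := by
  rw [← filter_ne', prod_filter]
  simp_rw [← Fin.val_ne_iff]
  rw [Fin.prod_univ_eq_prod_range (fun k => if k ≠ (l : ℕ) then f k else 1)]
  have hl : (l : ℕ) ≤ n := Nat.lt_succ_iff.mp l.isLt
  generalize (l : ℕ) = m at hl ⊢
  rw [show n + 1 = m + 1 + (n - m) by omega, prod_range_add, prod_range_succ]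
  simp only [ne_eq, not_true_eq_false, if_false, mul_one]
  congr 1
  · exact prod_congr rfl fun k hk => if_pos (mem_range.mp hk).ne
  · exact prod_congr rfl fun r _ => if_pos (by omega)

theorem sum_range_add_id (c m : ℕ) : ∑ k ∈ range m, (c + k) = m * c + m.choose 2 := by
  rw [sum_add_distrib, sum_const, card_range, smul_eq_mul, sum_range_id, Nat.choose_two_right]

theorem choose_two_le_mul {j n : ℕ} (hj : j ≤ n) : j.choose 2 ≤ n * j := by
  rw [Nat.choose_two_right]
  exact (Nat.div_le_self _ _).trans (Nat.mul_le_mul hj (Nat.sub_le _ _))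

theorem fib_cast_ne_zero {m : ℕ} (hm : m ≠ 0) : (Nat.fib m : ℝ) ≠ 0 :=
  Nat.cast_ne_zero.mpr (Nat.fib_pos.mpr (Nat.pos_of_ne_zero hm)).ne'

noncomputable def fibFactorial (k : ℕ) : ℝ := ∏ r ∈ range k, (Nat.fib (r + 1) : ℝ)

theorem fibFactorial_ne_zero (k : ℕ) : fibFactorial k ≠ 0 :=
  prod_ne_zero_iff.mpr fun r _ => fib_cast_ne_zero r.succ_ne_zero

theorem fibinom_mul_fibFactorial (m k : ℕ) :
    fibinom m k * fibFactorial k = ∏ r ∈ range k, (Nat.fib (m - r) : ℝ) := by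
  rw [fibinom, prod_div_distrib]
  exact div_mul_cancel₀ _ (fibFactorial_ne_zero k)

theorem fibinom_eq_zero {m k : ℕ} (h : m < k) : fibinom m k = 0 :=
  prod_eq_zero (mem_range.mpr h) (by simp)

theorem fibinom_succ_mul_fib (m k : ℕ) :
    fibinom m (k + 1) * Nat.fib (k + 1) = Nat.fib (m - k) * fibinom m k := by
  rw [fibinom, prod_range_succ, ← fibinom, mul_assoc,
    div_mul_cancel₀ _ (fib_cast_ne_zero k.succ_ne_zero), mul_comm]

theorem fibinom_succ_succ_mul_fib (m k : ℕ) :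
    fibinom (m + 1) (k + 1) * Nat.fib (k + 1) = Nat.fib (m + 1) * fibinom m k := by
  have h := fibinom_mul_fibFactorial (m + 1) (k + 1)
  rw [prod_range_succ', Nat.sub_zero, fibFactorial, prod_range_succ, ← fibFactorial] at h
  simp only [Nat.add_sub_add_right] at h
  rw [← fibinom_mul_fibFactorial] at h
  apply mul_right_cancel₀ (fibFactorial_ne_zero k)
  linear_combination h

theorem fibinom_succ_succ (m k : ℕ) :
    fibinom (m + 1) (k + 1) =
      Nat.fib k * fibinom m (k + 1) + Nat.fib (m - k + 1) * fibinom m k := by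
  rcases lt_or_ge m k with h | h
  · rw [fibinom_eq_zero h, fibinom_eq_zero (by omega), fibinom_eq_zero (by omega)]
    ring
  have hfib : (Nat.fib (m + 1) : ℝ) =
      Nat.fib (m - k) * Nat.fib k + Nat.fib (m - k + 1) * Nat.fib (k + 1) := by
    have := Nat.fib_add (m - k) k
    rw [Nat.sub_add_cancel h] at this
    exact_mod_cast this
  apply mul_right_cancel₀ (fib_cast_ne_zero k.succ_ne_zero)
  linear_combination fibinom_succ_succ_mul_fib m k + fibinom m k * hfib -
    Nat.fib k * fibinom_succ_mul_fib m k

theorem exists_int_fibinom_eq (m k : ℕ) : ∃ z : ℤ, fibinom m k = z := by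
  induction m generalizing k with
  | zero =>
    rcases k with _ | k
    · exact ⟨1, by simp [fibinom]⟩
    · exact ⟨0, by simp [fibinom_eq_zero]⟩
  | succ m ih =>
    rcases k with _ | k
    · exact ⟨1, by simp [fibinom]⟩
    · obtain ⟨a, ha⟩ := ih (k + 1)
      obtain ⟨b, hb⟩ := ih k
      refine ⟨Nat.fib k * a + Nat.fib (m - k + 1) * b, ?_⟩
      rw [fibinom_succ_succ, ha, hb]
      push_cast
      ring

theorem prod_fib_add_eq_fibinom_mul_fibinom (a n j : ℕ) (hj : j ≤ n) :
    ∏ k ∈ range (n + 1), (Nat.fib (a + k) : ℝ) =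
      fibinom (a + n) (n - j) * fibinom (a + j - 1) j *
        (fibFactorial (n - j) * fibFactorial j * Nat.fib (a + j)) := by
  have hlow : fibinom (a + j - 1) j * fibFactorial j =
      ∏ k ∈ range j, (Nat.fib (a + k) : ℝ) := by
    rw [fibinom_mul_fibFactorial, ← prod_range_reflect]
    exact prod_congr rfl fun k hk => by
      rw [show a + j - 1 - (j - 1 - k) = a + k by have := mem_range.mp hk; omega]
  have hhigh : fibinom (a + n) (n - j) * fibFactorial (n - j) =
      ∏ r ∈ range (n - j), (Nat.fib (a + (j + 1 + r)) : ℝ) := by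
    rw [fibinom_mul_fibFactorial, ← prod_range_reflect]
    exact prod_congr rfl fun r hr => by
      rw [show a + n - (n - j - 1 - r) = a + (j + 1 + r) by have := mem_range.mp hr; omega]
  rw [show n + 1 = j + 1 + (n - j) by omega, prod_range_add, prod_range_succ, ← hlow, ← hhigh]
  ring

theorem prod_erase_eq_neg_one_pow_mul_fibFactorial {n : ℕ} (l : Fin (n + 1)) (g : ℕ → ℝ)
    (e : ℕ → ℕ) (e' : ℕ) (hlt : ∀ k < (l : ℕ), g k = (-1) ^ e k * Nat.fib (l - k))
    (hgt : ∀ r < n - l, g (l + 1 + r) = (-1) ^ e' * Nat.fib (r + 1)) :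
    ∏ k ∈ univ.erase l, g k =
      (-1) ^ (∑ k ∈ range l, e k + (n - l) * e') * (fibFactorial l * fibFactorial (n - l)) := by
  have hrefl : ∏ k ∈ range l, (Nat.fib (l - k) : ℝ) = fibFactorial l := by
    rw [fibFactorial, ← prod_range_reflect]
    exact prod_congr rfl fun k hk => by
      rw [show (l : ℕ) - (l - 1 - k) = k + 1 by have := mem_range.mp hk; omega]
  rw [Fin.prod_erase_eq_prod_range_mul, prod_congr rfl fun k hk => hlt k (mem_range.mp hk),
    prod_congr rfl fun r hr => hgt r (mem_range.mp hr), prod_mul_distrib, prod_mul_distrib,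
    prod_pow_eq_pow_sum, prod_const, card_range, hrefl, pow_add, ← pow_mul, mul_comm e',
    ← fibFactorial]
  ring

def fibPoint (m : ℕ) : ℝ × ℝ := (Nat.fib m, Nat.fib (m + 1))

/-- d'Ocagne's identity. -/
theorem cross_fibPoint_add (b d : ℕ) :
    cross (fibPoint (b + d)) (fibPoint b) = (-1) ^ b * Nat.fib d := by
  induction b with
  | zero => simp [cross, fibPoint]
  | succ b ih =>
    simp only [cross, fibPoint] at ih ⊢
    rw [show b + 1 + d + 1 = b + d + 2 by ring, show b + 1 + 1 = b + 2 by ring,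
      show b + 1 + d = b + d + 1 by ring, Nat.fib_add_two, Nat.fib_add_two]
    push_cast
    linear_combination -ih

theorem cross_fibPoint_of_le {a b : ℕ} (h : b ≤ a) :
    cross (fibPoint a) (fibPoint b) = (-1) ^ b * Nat.fib (a - b) := by
  obtain ⟨d, rfl⟩ := Nat.exists_eq_add_of_le h
  rw [cross_fibPoint_add, Nat.add_sub_cancel_left]

theorem cross_fibPoint_ne_zero {a b : ℕ} (h : a ≠ b) :
    cross (fibPoint a) (fibPoint b) ≠ 0 := by
  rcases lt_or_gt_of_ne h with h | h
  · rw [cross_swap, neg_ne_zero, cross_fibPoint_of_le h.le]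
    exact mul_ne_zero (pow_ne_zero _ (by norm_num)) (fib_cast_ne_zero (by omega))
  · rw [cross_fibPoint_of_le h.le]
    exact mul_ne_zero (pow_ne_zero _ (by norm_num)) (fib_cast_ne_zero (by omega))

def rowPoint (α n k : ℕ) : ℝ × ℝ := fibPoint (α + n + k)

/-- The sign makes `cross (rowPoint α n i) (colPoint n j) = F_{α+i+j}` exactly. -/
def colPoint (n k : ℕ) : ℝ × ℝ := (-1 : ℝ) ^ (n + k) • fibPoint (n - k)

theorem cross_rowPoint_colPoint {α n i j : ℕ} (hj : j ≤ n) :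
    cross (rowPoint α n i) (colPoint n j) = Nat.fib (α + i + j) := by
  rw [rowPoint, colPoint, cross_smul_right, cross_fibPoint_of_le (by omega), ← mul_assoc,
    ← pow_add, show α + n + i - (n - j) = α + i + j by omega,
    (show Even (n + j + (n - j)) from ⟨n, by omega⟩).neg_one_pow, one_mul]

theorem cross_rowPoint_rowPoint_of_lt {α n k l : ℕ} (h : k < l) :
    cross (rowPoint α n l) (rowPoint α n k) = (-1) ^ (α + n + k) * Nat.fib (l - k) := by
  rw [rowPoint, rowPoint, cross_fibPoint_of_le (by omega),
    show α + n + l - (α + n + k) = l - k by omega]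

theorem cross_rowPoint_rowPoint_add (α n l r : ℕ) :
    cross (rowPoint α n l) (rowPoint α n (l + 1 + r)) =
      (-1) ^ (α + n + l + 1) * Nat.fib (r + 1) := by
  rw [cross_swap, rowPoint, rowPoint, cross_fibPoint_of_le (by omega),
    show α + n + (l + 1 + r) - (α + n + l) = r + 1 by omega, pow_succ]
  ring

theorem cross_colPoint_colPoint_of_lt {n k j : ℕ} (h : k < j) (hj : j ≤ n) :
    cross (colPoint n j) (colPoint n k) = (-1) ^ (n + 1 + k) * Nat.fib (j - k) := by
  rw [colPoint, colPoint, cross_smul_left, cross_smul_right, cross_swap,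
    cross_fibPoint_of_le (by omega), show n - k - (n - j) = j - k by omega]
  linear_combination (Nat.fib (j - k) : ℝ) * neg_one_pow_congr (R := ℝ)
    (m := n + j + (n + k) + (n - j) + 1) (n := n + 1 + k) (by simp only [Nat.even_iff]; omega)

theorem cross_colPoint_colPoint_add {n j r : ℕ} (h : j + 1 + r ≤ n) :
    cross (colPoint n j) (colPoint n (j + 1 + r)) = (-1) ^ (n + j) * Nat.fib (r + 1) := by
  rw [colPoint, colPoint, cross_smul_left, cross_smul_right,
    cross_fibPoint_of_le (by omega), show n - j - (n - (j + 1 + r)) = r + 1 by omega]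
  linear_combination (Nat.fib (r + 1) : ℝ) * neg_one_pow_congr (R := ℝ)
    (m := n + j + (n + (j + 1 + r)) + (n - (j + 1 + r))) (n := n + j)
    (by simp only [Nat.even_iff]; omega)

theorem cross_colPoint_ne_zero {n k l : ℕ} (hkl : k ≠ l) (hk : k ≤ n) (hl : l ≤ n) :
    cross (colPoint n k) (colPoint n l) ≠ 0 := by
  rw [colPoint, colPoint, cross_smul_left, cross_smul_right]
  exact mul_ne_zero (pow_ne_zero _ (by norm_num))
    (mul_ne_zero (pow_ne_zero _ (by norm_num)) (cross_fibPoint_ne_zero (by omega)))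

theorem prod_erase_cross_colPoint_rowPoint_mul {α n j : ℕ} (hj : j ≤ n) (l : Fin (n + 1)) :
    (∏ k ∈ univ.erase l, cross (colPoint n j) (rowPoint α n k)) * Nat.fib (α + j + l) =
      (-1) ^ n * ∏ k ∈ range (n + 1), (Nat.fib (α + j + k) : ℝ) := by
  have hterm : ∀ k : Fin (n + 1),
      cross (colPoint n j) (rowPoint α n k) = -Nat.fib (α + j + k) :=
    fun k => by rw [cross_swap, cross_rowPoint_colPoint hj, add_right_comm]
  simp only [hterm, neg_eq_neg_one_mul (Nat.fib _ : ℝ), prod_mul_distrib, prod_const,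
    card_erase_of_mem (mem_univ l), card_univ, Fintype.card_fin, Nat.add_sub_cancel, mul_assoc]
  rw [prod_erase_mul _ _ (mem_univ l),
    Fin.prod_univ_eq_prod_range (fun k => (Nat.fib (α + j + k) : ℝ))]

theorem prod_cross_rowPoint_colPoint (α n l : ℕ) :
    ∏ k : Fin (n + 1), cross (rowPoint α n l) (colPoint n k) =
      ∏ k ∈ range (n + 1), (Nat.fib (α + l + k) : ℝ) := by
  rw [← Fin.prod_univ_eq_prod_range]
  exact prod_congr rfl fun k _ => cross_rowPoint_colPoint (Nat.lt_succ_iff.mp k.isLt)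

theorem prod_erase_cross_rowPoint (α n : ℕ) (l : Fin (n + 1)) :
    ∏ k ∈ univ.erase l, cross (rowPoint α n l) (rowPoint α n k) =
      (-1) ^ (∑ k ∈ range l, (α + n + k) + (n - l) * (α + n + l + 1)) *
        (fibFactorial l * fibFactorial (n - l)) :=
  prod_erase_eq_neg_one_pow_mul_fibFactorial l _ _ _
    (fun _ hk => cross_rowPoint_rowPoint_of_lt hk) (fun r _ => cross_rowPoint_rowPoint_add α n l r)

theorem prod_erase_cross_colPoint (n : ℕ) (j : Fin (n + 1)) :
    ∏ k ∈ univ.erase j, cross (colPoint n j) (colPoint n k) =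
      (-1) ^ (∑ k ∈ range j, (n + 1 + k) + (n - j) * (n + j)) *
        (fibFactorial j * fibFactorial (n - j)) :=
  prod_erase_eq_neg_one_pow_mul_fibFactorial j _ _ _
    (fun _ hk => cross_colPoint_colPoint_of_lt hk (Nat.lt_succ_iff.mp j.isLt))
    (fun _ hr => cross_colPoint_colPoint_add (by omega))

theorem filbert_signs_mul_eq_neg_one_pow {α n j l : ℕ} (hj : j ≤ n) (hl : l ≤ n) :
    (-1 : ℝ) ^ (n * (α + j + l) - j.choose 2 - l.choose 2) *
        (-1) ^ (∑ k ∈ range j, (n + 1 + k) + (n - j) * (n + j)) *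
        (-1) ^ (∑ k ∈ range l, (α + n + k) + (n - l) * (α + n + l + 1)) = (-1) ^ n := by
  rw [← pow_add, ← pow_add]
  refine neg_one_pow_congr ?_
  obtain ⟨v, hv⟩ := Nat.exists_eq_add_of_le hj
  obtain ⟨u, hu⟩ := Nat.exists_eq_add_of_le hl
  have hc : j.choose 2 + l.choose 2 ≤ n * (α + j + l) := by
    nlinarith [choose_two_le_mul hj, choose_two_le_mul hl]
  have hjv : Even v ↔ (Even n ↔ Even j) := by rw [hv, Nat.even_add]; tauto
  have hlu : Even u ↔ (Even n ↔ Even l) := by rw [hu, Nat.even_add]; tauto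
  rw [sum_range_add_id, sum_range_add_id, Nat.sub_sub, show n - j = v by omega,
    show n - l = u by omega]
  simp only [parity_simps, Nat.even_sub hc, hjv, hlu]
  grind

theorem inv_filbert_apply {α : ℕ} (hα : 1 ≤ α) {n : ℕ} (i j : Fin (n + 1)) :
    (Matrix.of fun i j : Fin (n + 1) =>
          (1 : ℝ) / (Nat.fib (α + (i : ℕ) + (j : ℕ)) : ℝ))⁻¹ i j =
        (-1 : ℝ) ^ (n * (α + (i : ℕ) + (j : ℕ)) - Nat.choose (i : ℕ) 2 -
              Nat.choose (j : ℕ) 2) *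
          (Nat.fib (α + (i : ℕ) + (j : ℕ)) : ℝ) *
          fibinom (α + n + (i : ℕ)) (n - (j : ℕ)) *
          fibinom (α + n + (j : ℕ)) (n - (i : ℕ)) *
          fibinom (α + (i : ℕ) + (j : ℕ) - 1) (i : ℕ) *
          fibinom (α + (i : ℕ) + (j : ℕ) - 1) (j : ℕ) := by
  have hle : ∀ k : Fin (n + 1), (k : ℕ) ≤ n := fun k => Nat.lt_succ_iff.mp k.isLt
  have hM : (Matrix.of fun i j : Fin (n + 1) => (1 : ℝ) / Nat.fib (α + i + j)) =
      Matrix.of fun i j : Fin (n + 1) => (cross (rowPoint α n i) (colPoint n j))⁻¹ := by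
    ext a b
    rw [Matrix.of_apply, Matrix.of_apply, cross_rowPoint_colPoint (hle b), one_div]
  rw [hM, inv_of_inv_cross (fun k : Fin (n + 1) => rowPoint α n k) (fun k => colPoint n k)
    (fun k => fib_cast_ne_zero (by omega))
    (fun k => mul_ne_zero (pow_ne_zero _ (by norm_num)) (fib_cast_ne_zero (by omega)))
    (fun a b hab => cross_fibPoint_ne_zero (by have := Fin.val_ne_of_ne hab; omega))
    (fun a b hab => cross_colPoint_ne_zero (Fin.val_ne_of_ne hab) (hle a) (hle b))
    (fun a b => by rw [cross_rowPoint_colPoint (hle b)]; exact fib_cast_ne_zero (by omega)),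
    Matrix.of_apply, prod_cross_rowPoint_colPoint, prod_erase_cross_colPoint,
    prod_erase_cross_rowPoint]
  have hF : (Nat.fib (α + i + j) : ℝ) ≠ 0 := fib_cast_ne_zero (by omega)
  have hrow := prod_erase_cross_colPoint_rowPoint_mul (α := α) (hle i) j
  have hprod_i := prod_fib_add_eq_fibinom_mul_fibinom (α + i) n j (hle j)
  have hprod_j := prod_fib_add_eq_fibinom_mul_fibinom (α + j) n i (hle i)
  rw [add_right_comm α (i : ℕ) n] at hprod_i
  rw [add_right_comm α j i, add_right_comm α (j : ℕ) n] at hprod_j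
  rw [← eq_div_iff hF, hprod_i,
    ← filbert_signs_mul_eq_neg_one_pow (α := α) (hle i) (hle j)] at hrow
  rw [hrow, hprod_j]
  field_simp [fibFactorial_ne_zero]

theorem filbert_inverse_entries (α : ℕ) (hα : 1 ≤ α) (n : ℕ) (i j : Fin (n + 1)) :
    (Matrix.of fun i j : Fin (n + 1) =>
          (1 : ℝ) / (Nat.fib (α + (i : ℕ) + (j : ℕ)) : ℝ))⁻¹ i j =
        (-1 : ℝ) ^ (n * (α + (i : ℕ) + (j : ℕ)) - Nat.choose (i : ℕ) 2 -
              Nat.choose (j : ℕ) 2) *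
          (Nat.fib (α + (i : ℕ) + (j : ℕ)) : ℝ) *
          fibinom (α + n + (i : ℕ)) (n - (j : ℕ)) * fibinom (α + n + (j : ℕ)) (n - (i : ℕ)) *
          fibinom (α + (i : ℕ) + (j : ℕ) - 1) (i : ℕ) *
          fibinom (α + (i : ℕ) + (j : ℕ) - 1) (j : ℕ) ∧
      ∃ z : ℤ,
        (Matrix.of fun i j : Fin (n + 1) =>
            (1 : ℝ) / (Nat.fib (α + (i : ℕ) + (j : ℕ)) : ℝ))⁻¹ i j = (z : ℝ) := by
  refine ⟨inv_filbert_apply hα i j, ?_⟩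
  obtain ⟨a, ha⟩ := exists_int_fibinom_eq (α + n + i) (n - j)
  obtain ⟨b, hb⟩ := exists_int_fibinom_eq (α + n + j) (n - i)
  obtain ⟨c, hc⟩ := exists_int_fibinom_eq (α + i + j - 1) i
  obtain ⟨d, hd⟩ := exists_int_fibinom_eq (α + i + j - 1) j
  refine ⟨(-1) ^ (n * (α + i + j) - Nat.choose i 2 - Nat.choose j 2) *
    Nat.fib (α + i + j) * a * b * c * d, ?_⟩
  rw [inv_filbert_apply hα i j, ha, hb, hc, hd]
  push_cast
  ring
end
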